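/- Let m = 1 and suppose V and R satisfy the (P,p,T,t,1)-quadratic Lyapunov inequality with (P,p,T,t) = (0,0,0,1). Let f_1 ∈ F_{σ_1,β_1}(H), let {ξ_k = (x_k,u_k,y_k,F_k)}_{k≥0} be any trajectory of the algorithm (ξ_0 is algorithm-consistent and ξ_{k+1} is a successor of ξ_k for every k), and let ξ⋆ = (x⋆,u⋆,y⋆,F⋆) be a fixed point. Then for every k ≥ 0: (a) the function value suboptimalities f_1(y_j) − f_1(y⋆) (j = 0,…,k) are nonnegative and sum to at most V(ξ_0,ξ⋆); and (b) the ergodic suboptimality satisfies f_1((1/(k+1)) Σ_{j=0}^{k} y_j) − f_1(y⋆) ≤ V(ξ_0,ξ⋆)/(k+1). -/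

import Mathlib

open scoped ENNReal
open Matrix

/-- `u` is a subgradient of `f` at `x`: `f z ≥ f x + ⟨u, z - x⟩` for all `z`. -/
def IsSubgradientAt {H : Type*} [NormedAddCommGroup H] [InnerProductSpace ℝ H]
    (f : H → ℝ) (u x : H) : Prop :=
  ∀ z : H, f x + (inner ℝ u (z - x) : ℝ) ≤ f z

/-- `f` is `σ`-strongly convex: `f - (σ/2)‖·‖²` is convex. -/
def StronglyConvex {H : Type*} [NormedAddCommGroup H] [InnerProductSpace ℝ H]
    (σ : ℝ) (f : H → ℝ) : Prop :=
  ConvexOn ℝ Set.univ (fun x => f x - σ / 2 * ‖x‖ ^ 2)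

/-- `f` is `β`-smooth: differentiable with `β`-Lipschitz gradient. -/
def IsSmoothWith {H : Type*} [NormedAddCommGroup H] [InnerProductSpace ℝ H]
    [CompleteSpace H] (β : ℝ) (f : H → ℝ) : Prop :=
  Differentiable ℝ f ∧ ∀ x y : H, ‖gradient f x - gradient f y‖ ≤ β * ‖x - y‖

/-- Membership in the function class `F_{σ,β}(H)`. -/
def MemFClass {H : Type*} [NormedAddCommGroup H] [InnerProductSpace ℝ H]
    [CompleteSpace H] (σ : ℝ) (β : ℝ≥0∞) (f : H → ℝ) : Prop :=
  StronglyConvex σ f ∧ (β ≠ ⊤ → IsSmoothWith β.toReal f) ∧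
    (β = ⊤ → LowerSemicontinuous f)

/-- `(M ⊗ Id) z` for a real matrix `M` acting on tuples of Hilbert-space vectors. -/
def matVecH {H : Type*} [AddCommGroup H] [Module ℝ H] {p q : Type*} [Fintype q]
    (M : Matrix p q ℝ) (z : q → H) : p → H :=
  fun i => ∑ j, M i j • z j

/-- The point `(x, u, y, F)` is algorithm-consistent for `f`. -/
def AlgConsistent {H : Type*} [NormedAddCommGroup H] [InnerProductSpace ℝ H]
    {n m : ℕ} (C : Matrix (Fin m) (Fin n) ℝ) (D : Matrix (Fin m) (Fin m) ℝ)
    (f : Fin m → H → ℝ) (x : Fin n → H) (u y : Fin m → H) (F : Fin m → ℝ) : Prop :=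
  y = matVecH C x + matVecH D u ∧ (∀ i, IsSubgradientAt (f i) (u i) (y i)) ∧
    ∀ i, F i = f i (y i)

/-- `(x, u, y, F)` is a fixed point of the algorithm. -/
def IsFixedPoint {H : Type*} [NormedAddCommGroup H] [InnerProductSpace ℝ H]
    {n m : ℕ} (A : Matrix (Fin n) (Fin n) ℝ) (B : Matrix (Fin n) (Fin m) ℝ)
    (C : Matrix (Fin m) (Fin n) ℝ) (D : Matrix (Fin m) (Fin m) ℝ)
    (f : Fin m → H → ℝ) (x : Fin n → H) (u y : Fin m → H) (F : Fin m → ℝ) : Prop :=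
  x = matVecH A x + matVecH B u ∧ AlgConsistent C D f x u y F

/-- `(xp, up, yp, Fp)` is a successor of an algorithm-consistent point with data `(x, u)`. -/
def IsSuccessor {H : Type*} [NormedAddCommGroup H] [InnerProductSpace ℝ H]
    {n m : ℕ} (A : Matrix (Fin n) (Fin n) ℝ) (B : Matrix (Fin n) (Fin m) ℝ)
    (C : Matrix (Fin m) (Fin n) ℝ) (D : Matrix (Fin m) (Fin m) ℝ)
    (f : Fin m → H → ℝ) (x : Fin n → H) (u : Fin m → H)
    (xp : Fin n → H) (up yp : Fin m → H) (Fp : Fin m → ℝ) : Prop :=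
  xp = matVecH A x + matVecH B u ∧ AlgConsistent C D f xp up yp Fp

/-- The matrix `N = [I_{m−1}; −𝟏ᵀ] ∈ ℝ^{m×(m−1)}`. -/
def Nmat (m : ℕ) : Matrix (Fin m) (Fin (m - 1)) ℝ :=
  Matrix.of fun i j => if (i : ℕ) = (j : ℕ) then 1 else if (i : ℕ) = m - 1 then -1 else 0

/-- Assumption 1: the range and null-space conditions on `(A, B, C, D)`. -/
def Assumption1 {n m : ℕ} (A : Matrix (Fin n) (Fin n) ℝ) (B : Matrix (Fin n) (Fin m) ℝ)
    (C : Matrix (Fin m) (Fin n) ℝ) (D : Matrix (Fin m) (Fin m) ℝ) : Prop :=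
  LinearMap.range (Matrix.fromBlocks (B * Nmat m) 0 (D * Nmat m)
      (Matrix.of fun (_ : Fin m) (_ : Fin 1) => (-1 : ℝ))).mulVecLin ≤
    LinearMap.range (Matrix.fromRows (1 - A) (-C)).mulVecLin ∧
  LinearMap.ker (Matrix.fromCols (1 - A) (-B)).mulVecLin ≤
    LinearMap.ker (Matrix.fromBlocks ((Nmat m)ᵀ * C) ((Nmat m)ᵀ * D) 0
      (Matrix.of fun (_ : Fin 1) (_ : Fin m) => (1 : ℝ))).mulVecLin

/-- Assumption 2: `D` lower triangular with nonpositive diagonal, and for each `i`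
either `β_i < +∞` or `D_{ii} < 0`. -/
def Assumption2 {m : ℕ} (β : Fin m → ℝ≥0∞) (D : Matrix (Fin m) (Fin m) ℝ) : Prop :=
  (∀ i j : Fin m, (i : ℕ) < (j : ℕ) → D i j = 0) ∧ (∀ i, D i i ≤ 0) ∧
    ∀ i, β i ≠ ⊤ ∨ D i i < 0

/-- Sum inner product quadratic form `Q(M, z) = ⟨z, (M ⊗ Id) z⟩` on `H^ι`. -/
noncomputable def quadFormH {H : Type*} [NormedAddCommGroup H] [InnerProductSpace ℝ H]
    {ι : Type*} [Fintype ι] (M : Matrix ι ι ℝ) (z : ι → H) : ℝ :=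
  ∑ i, ∑ j, M i j * (inner ℝ (z i) (z j) : ℝ)

/-- The index set of `ℝ^{n+2m}`, split as `n + m + m`. -/
abbrev StIdx (n m : ℕ) := Fin n ⊕ (Fin m ⊕ Fin m)

/-- The index set of `ℝ^{n+3m-1}`, split as `n + m + m + (m-1)`. -/
abbrev ColIdx (n m : ℕ) := Fin n ⊕ (Fin m ⊕ (Fin m ⊕ Fin (m - 1)))

/-- The index set of `ℝ^{2m}`. -/
abbrev TwoM (m : ℕ) := Fin m ⊕ Fin m

/-- The index set of `ℝ^{3m}`. -/
abbrev ThreeM (m : ℕ) := Fin 3 × Fin m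

/-- The tuple `(x, u, v) ∈ H^{n+2m}`. -/
def tripleH {H : Type*} {n m : ℕ} (x : Fin n → H) (u v : Fin m → H) : StIdx n m → H :=
  Sum.elim x (Sum.elim u v)

/-- The value `Q(Q,(x−x⋆,u,u⋆)) + qᵀ(F−F⋆)` of a quadratic ansatz. -/
noncomputable def Vval {H : Type*} [NormedAddCommGroup H] [InnerProductSpace ℝ H]
    {n m : ℕ} (Q : Matrix (StIdx n m) (StIdx n m) ℝ) (q : Fin m → ℝ)
    (x : Fin n → H) (u : Fin m → H) (F : Fin m → ℝ)
    (xs : Fin n → H) (us : Fin m → H) (Fs : Fin m → ℝ) : ℝ :=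
  quadFormH Q (tripleH (x - xs) u us) + ∑ i, q i * (F i - Fs i)

/-- `V` and `R` (given by `(Q,q)` and `(S,s)`) satisfy the `(P,p,T,t,ρ)`-quadratic
Lyapunov inequality for the algorithm `(A,B,C,D)` over the class determined by `σ, β`. -/
def QuadLyap {H : Type*} [NormedAddCommGroup H] [InnerProductSpace ℝ H] [CompleteSpace H]
    {n m : ℕ}
    (A : Matrix (Fin n) (Fin n) ℝ) (B : Matrix (Fin n) (Fin m) ℝ)
    (C : Matrix (Fin m) (Fin n) ℝ) (D : Matrix (Fin m) (Fin m) ℝ)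
    (σ : Fin m → ℝ) (β : Fin m → ℝ≥0∞)
    (Q S P T : Matrix (StIdx n m) (StIdx n m) ℝ) (q s p t : Fin m → ℝ) (ρ : ℝ) : Prop :=
  -- C1
  (∀ f : Fin m → H → ℝ, (∀ i, MemFClass (σ i) (β i) (f i)) →
    ∀ x u y F, AlgConsistent C D f x u y F →
    ∀ xp up yp Fp, IsSuccessor A B C D f x u xp up yp Fp →
    ∀ xs us ys Fs, IsFixedPoint A B C D f xs us ys Fs →
      Vval Q q xp up Fp xs us Fs ≤ ρ * Vval Q q x u F xs us Fs - Vval S s x u F xs us Fs) ∧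
  -- C2
  (∀ f : Fin m → H → ℝ, (∀ i, MemFClass (σ i) (β i) (f i)) →
    ∀ x u y F, AlgConsistent C D f x u y F →
    ∀ xs us ys Fs, IsFixedPoint A B C D f xs us ys Fs →
      Vval P p x u F xs us Fs ≤ Vval Q q x u F xs us Fs ∧ 0 ≤ Vval P p x u F xs us Fs) ∧
  -- C3
  (∀ f : Fin m → H → ℝ, (∀ i, MemFClass (σ i) (β i) (f i)) →
    ∀ x u y F, AlgConsistent C D f x u y F →
    ∀ xs us ys Fs, IsFixedPoint A B C D f xs us ys Fs →
      Vval T t x u F xs us Fs ≤ Vval S s x u F xs us Fs ∧ 0 ≤ Vval T t x u F xs us Fs)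

/-- Labels `∅`, `+`, `⋆` for points entering the interpolation inequalities. -/
inductive Lbl
  | o : Lbl
  | pl : Lbl
  | st : Lbl
deriving DecidableEq

instance : Fintype Lbl := ⟨{Lbl.o, Lbl.pl, Lbl.st}, by intro x; cases x <;> decide⟩

/-- A row of four column blocks of sizes `n, m, m, m-1`. -/
def rb4 {n m : ℕ} {r : Type*} (M1 : Matrix r (Fin n) ℝ) (M2 M3 : Matrix r (Fin m) ℝ)
    (M4 : Matrix r (Fin (m - 1)) ℝ) : Matrix r (ColIdx n m) ℝ :=
  Matrix.of fun i => Sum.elim (M1 i) (Sum.elim (M2 i) (Sum.elim (M3 i) (M4 i)))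

/-- Stack three `m`-row blocks into a `3m`-row matrix. -/
def stack3 {n m : ℕ} (R1 R2 R3 : Matrix (Fin m) (ColIdx n m) ℝ) :
    Matrix (ThreeM m) (ColIdx n m) ℝ :=
  Matrix.of fun p => (![R1, R2, R3] p.1) p.2

/-- The matrices `E_{i,j} ∈ ℝ^{3m×(n+3m−1)}` (zero for `i = j`). -/
def Emat {n m : ℕ} (A : Matrix (Fin n) (Fin n) ℝ) (B : Matrix (Fin n) (Fin m) ℝ)
    (C : Matrix (Fin m) (Fin n) ℝ) (D : Matrix (Fin m) (Fin m) ℝ) :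
    Lbl → Lbl → Matrix (ThreeM m) (ColIdx n m) ℝ
  | .o, .pl => stack3 (rb4 (C * (1 - A)) (D - C * B) (-D) (C * B * Nmat m))
      (rb4 0 1 0 0) (rb4 0 0 1 0)
  | .pl, .o => stack3 (rb4 (C * (A - 1)) (C * B - D) D (-(C * B * Nmat m)))
      (rb4 0 0 1 0) (rb4 0 1 0 0)
  | .o, .st => stack3 (rb4 C D 0 (-(D * Nmat m))) (rb4 0 1 0 0) (rb4 0 0 0 (Nmat m))
  | .st, .o => stack3 (rb4 (-C) (-D) 0 (D * Nmat m)) (rb4 0 0 0 (Nmat m)) (rb4 0 1 0 0)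
  | .pl, .st => stack3 (rb4 (C * A) (C * B) D (-(D * Nmat m) - C * B * Nmat m))
      (rb4 0 0 1 0) (rb4 0 0 0 (Nmat m))
  | .st, .pl => stack3 (rb4 (-(C * A)) (-(C * B)) (-D) (D * Nmat m + C * B * Nmat m))
      (rb4 0 0 0 (Nmat m)) (rb4 0 0 1 0)
  | _, _ => 0

/-- The matrices `H_{i,j} ∈ ℝ^{m×2m}` (zero for `i = j`). -/
def Hmat (m : ℕ) : Lbl → Lbl → Matrix (Fin m) (TwoM m) ℝ
  | .o, .pl => Matrix.fromCols 1 (-1)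
  | .pl, .o => Matrix.fromCols (-1) 1
  | .o, .st => Matrix.fromCols 1 0
  | .st, .o => Matrix.fromCols (-1) 0
  | .pl, .st => Matrix.fromCols 0 1
  | .st, .pl => Matrix.fromCols 0 (-1)
  | _, _ => 0

/-- The vector `a_l = −e_l ∈ ℝ^m`. -/
def aVec {m : ℕ} (l : Fin m) : Fin m → ℝ := -(Pi.single l 1)

/-- The interpolation matrices `M_l ∈ S^{3m}`. -/
noncomputable def Mmat {m : ℕ} (σ : Fin m → ℝ) (β : Fin m → ℝ≥0∞) (l : Fin m) :
    Matrix (ThreeM m) (ThreeM m) ℝ :=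
  if β l = ⊤ then
    Matrix.kronecker ((1 / 2 : ℝ) • !![σ l, 0, 1; 0, 0, 0; 1, 0, 0])
      (Matrix.diagonal (Pi.single l 1))
  else
    Matrix.kronecker
      ((1 / (2 * ((β l).toReal - σ l))) •
        !![(β l).toReal * σ l, -σ l, (β l).toReal;
           -σ l, 1, -1;
           (β l).toReal, -1, 1])
      (Matrix.diagonal (Pi.single l 1))

/-- `𝕄_{(l,i,j)} = E_{i,j}ᵀ M_l E_{i,j} ∈ S^{n+3m−1}`. -/
noncomputable def bbM {n m : ℕ} (A : Matrix (Fin n) (Fin n) ℝ) (B : Matrix (Fin n) (Fin m) ℝ)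
    (C : Matrix (Fin m) (Fin n) ℝ) (D : Matrix (Fin m) (Fin m) ℝ)
    (σ : Fin m → ℝ) (β : Fin m → ℝ≥0∞) (l : Fin m) (i j : Lbl) :
    Matrix (ColIdx n m) (ColIdx n m) ℝ :=
  (Emat A B C D i j)ᵀ * Mmat σ β l * Emat A B C D i j

/-- `𝕒_{(l,i,j)} = H_{i,j}ᵀ a_l ∈ ℝ^{2m}`. -/
def bba {m : ℕ} (l : Fin m) (i j : Lbl) : TwoM m → ℝ :=
  (Hmat m i j)ᵀ.mulVec (aVec l)

/-- `Σ_∅ = [I, 0, 0, 0; 0, I, 0, 0; 0, 0, 0, N] ∈ ℝ^{(n+2m)×(n+3m−1)}`. -/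
def SigO (n m : ℕ) : Matrix (StIdx n m) (ColIdx n m) ℝ :=
  Matrix.of (Sum.elim (rb4 1 0 0 0) (Sum.elim (rb4 0 1 0 0) (rb4 0 0 0 (Nmat m))))

/-- `Σ_+ = [A, B, 0, −BN; 0, 0, I, 0; 0, 0, 0, N] ∈ ℝ^{(n+2m)×(n+3m−1)}`. -/
def SigP {n m : ℕ} (A : Matrix (Fin n) (Fin n) ℝ) (B : Matrix (Fin n) (Fin m) ℝ) :
    Matrix (StIdx n m) (ColIdx n m) ℝ :=
  Matrix.of (Sum.elim (rb4 A B 0 (-(B * Nmat m)))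
    (Sum.elim (rb4 0 0 1 0) (rb4 0 0 0 (Nmat m))))

/-!
Along a trajectory the descent inequality `V₊ ≤ V - R` telescopes, and `R ≥ f₁(y) - f₁(y⋆) ≥ 0`
together with `V ≥ 0` bounds the partial sums of the suboptimalities by `V(ξ₀, ξ⋆)`. Since
`σ₁ ≥ 0`, `f₁` is convex, and Jensen's inequality transfers the averaged bound to the ergodic
iterate.
-/

open Finset

theorem StronglyConvex.convexOn {H : Type*} [NormedAddCommGroup H] [InnerProductSpace ℝ H]
    {σ : ℝ} {f : H → ℝ} (hf : StronglyConvex σ f) (hσ : 0 ≤ σ) : ConvexOn ℝ Set.univ f :=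
  strongConvexOn_zero.1 ((strongConvexOn_iff_convex.2 hf).mono hσ)

theorem sum_range_le_of_le_sub {V R : ℕ → ℝ} (hdesc : ∀ k, V (k + 1) ≤ V k - R k)
    (hV : ∀ k, 0 ≤ V k) (N : ℕ) : ∑ j ∈ range N, R j ≤ V 0 :=
  calc ∑ j ∈ range N, R j ≤ ∑ j ∈ range N, (V j - V (j + 1)) :=
        sum_le_sum fun j _ => by linarith [hdesc j]
    _ = V 0 - V N := sum_range_sub' V N
    _ ≤ V 0 := sub_le_self _ (hV N)

theorem ConvexOn.map_average_sub_le {E : Type*} [AddCommGroup E] [Module ℝ E] {g : E → ℝ}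
    (hg : ConvexOn ℝ Set.univ g) (y : ℕ → E) {c b : ℝ} {k : ℕ}
    (h : ∑ j ∈ range (k + 1), (g (y j) - c) ≤ b) :
    g ((1 / (k + 1 : ℝ)) • ∑ j ∈ range (k + 1), y j) - c ≤ b / (k + 1) := by
  have hk : (0 : ℝ) < k + 1 := by positivity
  have hjensen : g ((1 / (k + 1 : ℝ)) • ∑ j ∈ range (k + 1), y j) ≤
      1 / (k + 1 : ℝ) * ∑ j ∈ range (k + 1), g (y j) := by
    have hw : ∑ _j ∈ range (k + 1), 1 / (k + 1 : ℝ) = 1 := by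
      rw [sum_const, card_range, nsmul_eq_mul]; push_cast; field_simp
    simpa only [smul_sum, mul_sum, smul_eq_mul] using
      hg.map_sum_le (fun _ _ => by positivity) hw fun _ _ => Set.mem_univ _
  rw [sum_sub_distrib, sum_const, card_range, nsmul_eq_mul] at h
  push_cast at h
  calc g ((1 / (k + 1 : ℝ)) • ∑ j ∈ range (k + 1), y j) - c
      ≤ 1 / (k + 1 : ℝ) * ∑ j ∈ range (k + 1), g (y j) - c := by linarith
    _ = (∑ j ∈ range (k + 1), g (y j) - (k + 1) * c) / (k + 1) := by field_simp
    _ ≤ b / (k + 1) := div_le_div_of_nonneg_right h hk.le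

section Trajectory

variable {H : Type*} [NormedAddCommGroup H] [InnerProductSpace ℝ H] {n m : ℕ}
  {A : Matrix (Fin n) (Fin n) ℝ} {B : Matrix (Fin n) (Fin m) ℝ}
  {C : Matrix (Fin m) (Fin n) ℝ} {D : Matrix (Fin m) (Fin m) ℝ} {f : Fin m → H → ℝ}
  {x : ℕ → Fin n → H} {u y : ℕ → Fin m → H} {F : ℕ → Fin m → ℝ}

theorem algConsistent_of_trajectory (htraj0 : AlgConsistent C D f (x 0) (u 0) (y 0) (F 0))
    (htraj : ∀ k : ℕ,
      IsSuccessor A B C D f (x k) (u k) (x (k + 1)) (u (k + 1)) (y (k + 1)) (F (k + 1))) :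
    ∀ k, AlgConsistent C D f (x k) (u k) (y k) (F k)
  | 0 => htraj0
  | k + 1 => (htraj k).2

theorem QuadLyap.sum_range_le [CompleteSpace H] {σ : Fin m → ℝ} {β : Fin m → ℝ≥0∞}
    {Q S P T : Matrix (StIdx n m) (StIdx n m) ℝ} {q s p t : Fin m → ℝ}
    (hLyap : QuadLyap (H := H) A B C D σ β Q S P T q s p t 1)
    (hf : ∀ i, MemFClass (σ i) (β i) (f i))
    (htraj0 : AlgConsistent C D f (x 0) (u 0) (y 0) (F 0))
    (htraj : ∀ k : ℕ,
      IsSuccessor A B C D f (x k) (u k) (x (k + 1)) (u (k + 1)) (y (k + 1)) (F (k + 1)))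
    {xs : Fin n → H} {us ys : Fin m → H} {Fs : Fin m → ℝ}
    (hfix : IsFixedPoint A B C D f xs us ys Fs) (N : ℕ) :
    ∑ j ∈ range N, Vval T t (x j) (u j) (F j) xs us Fs ≤ Vval Q q (x 0) (u 0) (F 0) xs us Fs := by
  obtain ⟨hC1, hC2, hC3⟩ := hLyap
  have hcons := algConsistent_of_trajectory htraj0 htraj
  refine (sum_le_sum fun j _ => (hC3 f hf _ _ _ _ (hcons j) _ _ _ _ hfix).1).trans ?_
  refine sum_range_le_of_le_sub (V := fun k => Vval Q q (x k) (u k) (F k) xs us Fs)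
    (R := fun k => Vval S s (x k) (u k) (F k) xs us Fs) (fun k => ?_) (fun k => ?_) N
  · simpa only [one_mul] using hC1 f hf _ _ _ _ (hcons k) _ _ _ _ (htraj k) _ _ _ _ hfix
  · obtain ⟨hPV, hP⟩ := hC2 f hf _ _ _ _ (hcons k) _ _ _ _ hfix
    exact hP.trans hPV

end Trajectory

theorem Vval_zero_const_one {H : Type*} [NormedAddCommGroup H] [InnerProductSpace ℝ H]
    {n : ℕ} (x : Fin n → H) (u : Fin 1 → H) (F : Fin 1 → ℝ)
    (xs : Fin n → H) (us : Fin 1 → H) (Fs : Fin 1 → ℝ) :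
    Vval (0 : Matrix (StIdx n 1) (StIdx n 1) ℝ) (fun _ => 1) x u F xs us Fs = F 0 - Fs 0 := by
  simp [Vval, quadFormH]

theorem quadLyap_function_value_suboptimality_general
    {H : Type*} [NormedAddCommGroup H] [InnerProductSpace ℝ H] [CompleteSpace H]
    {n : ℕ}
    (A : Matrix (Fin n) (Fin n) ℝ) (B : Matrix (Fin n) (Fin 1) ℝ)
    (C : Matrix (Fin 1) (Fin n) ℝ) (D : Matrix (Fin 1) (Fin 1) ℝ)
    (σ : Fin 1 → ℝ) (β : Fin 1 → ℝ≥0∞)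
    (hσβ : ∀ i, 0 ≤ σ i ∧ ENNReal.ofReal (σ i) < β i)
    (Q S : Matrix (StIdx n 1) (StIdx n 1) ℝ) (q s : Fin 1 → ℝ)
    (hLyap : QuadLyap (H := H) A B C D σ β Q S 0 0 q s 0 (fun _ => 1) 1)
    (f : Fin 1 → H → ℝ) (hf : ∀ i, MemFClass (σ i) (β i) (f i))
    (x : ℕ → Fin n → H) (u y : ℕ → Fin 1 → H) (F : ℕ → Fin 1 → ℝ)
    (htraj0 : AlgConsistent C D f (x 0) (u 0) (y 0) (F 0))
    (htraj : ∀ k : ℕ,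
      IsSuccessor A B C D f (x k) (u k) (x (k + 1)) (u (k + 1)) (y (k + 1)) (F (k + 1)))
    (xs : Fin n → H) (us ys : Fin 1 → H) (Fs : Fin 1 → ℝ)
    (hfix : IsFixedPoint A B C D f xs us ys Fs) :
    -- (a) nonnegative suboptimalities with partial sums bounded by V(ξ₀,ξ⋆)
    (∀ k : ℕ, 0 ≤ f 0 (y k 0) - f 0 (ys 0)) ∧
    (∀ k : ℕ, ∑ j ∈ Finset.range (k + 1), (f 0 (y j 0) - f 0 (ys 0)) ≤
        Vval Q q (x 0) (u 0) (F 0) xs us Fs) ∧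
    -- (b) ergodic O(1/k) convergence
    (∀ k : ℕ,
      f 0 ((1 / (k + 1 : ℝ)) • ∑ j ∈ Finset.range (k + 1), y j 0) - f 0 (ys 0) ≤
        Vval Q q (x 0) (u 0) (F 0) xs us Fs / (k + 1 : ℝ)) := by
  have hcons := algConsistent_of_trajectory htraj0 htraj
  have hsub : ∀ k, f 0 (y k 0) - f 0 (ys 0) =
      Vval (0 : Matrix (StIdx n 1) (StIdx n 1) ℝ) (fun _ => 1) (x k) (u k) (F k) xs us Fs := by
    intro k
    rw [Vval_zero_const_one, (hcons k).2.2 0, hfix.2.2.2 0]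
  have hpart : ∀ k : ℕ, ∑ j ∈ range (k + 1), (f 0 (y j 0) - f 0 (ys 0)) ≤
      Vval Q q (x 0) (u 0) (F 0) xs us Fs := fun k => by
    simpa only [hsub] using hLyap.sum_range_le hf htraj0 htraj hfix (k + 1)
  refine ⟨fun k => ?_, hpart, fun k => ?_⟩
  · rw [hsub]
    exact (hLyap.2.2 f hf _ _ _ _ (hcons k) _ _ _ _ hfix).2
  · exact ((hf 0).1.convexOn (hσβ 0).1).map_average_sub_le _ (hpart k)

/-- For `m = 1` and a `(0,0,0,1,1)`-quadratic Lyapunov inequality: the function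
value suboptimalities are nonnegative, their partial sums are bounded by
`V(ξ_0,ξ⋆)`, and the ergodic function value suboptimality decays like
`V(ξ_0,ξ⋆)/(k+1)`. -/
theorem quadLyap_function_value_suboptimality
    {H : Type*} [NormedAddCommGroup H] [InnerProductSpace ℝ H] [CompleteSpace H]
    {n : ℕ} (hn : 1 ≤ n)
    (A : Matrix (Fin n) (Fin n) ℝ) (B : Matrix (Fin n) (Fin 1) ℝ)
    (C : Matrix (Fin 1) (Fin n) ℝ) (D : Matrix (Fin 1) (Fin 1) ℝ)
    (σ : Fin 1 → ℝ) (β : Fin 1 → ℝ≥0∞)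
    (hσβ : ∀ i, 0 ≤ σ i ∧ ENNReal.ofReal (σ i) < β i)
    (Q S : Matrix (StIdx n 1) (StIdx n 1) ℝ) (q s : Fin 1 → ℝ)
    (hLyap : QuadLyap (H := H) A B C D σ β Q S 0 0 q s 0 (fun _ => 1) 1)
    (f : Fin 1 → H → ℝ) (hf : ∀ i, MemFClass (σ i) (β i) (f i))
    (x : ℕ → Fin n → H) (u y : ℕ → Fin 1 → H) (F : ℕ → Fin 1 → ℝ)
    (htraj0 : AlgConsistent C D f (x 0) (u 0) (y 0) (F 0))
    (htraj : ∀ k : ℕ,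
      IsSuccessor A B C D f (x k) (u k) (x (k + 1)) (u (k + 1)) (y (k + 1)) (F (k + 1)))
    (xs : Fin n → H) (us ys : Fin 1 → H) (Fs : Fin 1 → ℝ)
    (hfix : IsFixedPoint A B C D f xs us ys Fs) :
    -- (a) nonnegative suboptimalities with partial sums bounded by V(ξ₀,ξ⋆)
    (∀ k : ℕ, 0 ≤ f 0 (y k 0) - f 0 (ys 0)) ∧
    (∀ k : ℕ, ∑ j ∈ Finset.range (k + 1), (f 0 (y j 0) - f 0 (ys 0)) ≤
        Vval Q q (x 0) (u 0) (F 0) xs us Fs) ∧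
    -- (b) ergodic O(1/k) convergence
    (∀ k : ℕ,
      f 0 ((1 / (k + 1 : ℝ)) • ∑ j ∈ Finset.range (k + 1), y j 0) - f 0 (ys 0) ≤
        Vval Q q (x 0) (u 0) (F 0) xs us Fs / (k + 1 : ℝ)) :=
  quadLyap_function_value_suboptimality_general A B C D σ β hσβ Q S q s hLyap f hf x u y F htraj0
    htraj xs us ys Fs hfix
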